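/- The Frobenius loss φ: M(d,d) → ℝ, d ≥ 2, is not a proper map: the level set φ⁻¹({1}) is unbounded. -/

import Mathlib

/-- Real cube root. -/
noncomputable def cbrt (x : ℝ) : ℝ :=
  if 0 ≤ x then x ^ ((1:ℝ)/3) else -((-x) ^ ((1:ℝ)/3))

/-- Frobenius loss `φ(W) = ∑_{i,j} ⟨wᵢ,wⱼ⟩³ − 2∑_{i,j} ⟨wᵢ,eⱼ⟩³ + d`. -/
noncomputable def phi (d : ℕ) (W : Fin d → Fin d → ℝ) : ℝ :=
  (∑ i, ∑ j, (∑ k, W i k * W j k) ^ 3) - 2 * ∑ i, ∑ j, (W i j) ^ 3 + d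

/-- The matrix `C₅ₜ(d) = I_{d-2} ⊕ [[(1-t³)^{1/3}, 0],[t, 0]]`. -/
noncomputable def C5 (d : ℕ) (t : ℝ) : Fin d → Fin d → ℝ := fun i j =>
  if (i : ℕ) < d - 2 then (if i = j then 1 else 0)
  else if (i : ℕ) = d - 2 then (if (j : ℕ) = d - 2 then cbrt (1 - t ^ 3) else 0)
  else (if (j : ℕ) = d - 2 then t else 0)

/-!
If every row of `W` has at most one nonzero entry, the cubed Gram entries split column by
column, `⟨wᵢ,wⱼ⟩³ = ∑ₖ Wᵢₖ³ Wⱼₖ³`, so `φ(W) = ∑ₖ (∑ᵢ Wᵢₖ³ − 1)²`. The column cube sums of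
`C₅ₜ(d)` are `1, …, 1, (1 − t³) + t³ = 1, 0`, hence `φ(C₅ₜ(d)) = 1` for every `t`, while `t`
itself is an entry of `C₅ₜ(d)`.
-/
lemma cbrt_pow_three (x : ℝ) : cbrt x ^ 3 = x := by
  have cube_rpow_third : ∀ y : ℝ, 0 ≤ y → (y ^ ((1 : ℝ) / 3)) ^ 3 = y := fun y hy => by
    rw [← Real.rpow_natCast, ← Real.rpow_mul hy]
    norm_num
  unfold cbrt
  split_ifs with hx
  · exact cube_rpow_third x hx
  · rw [neg_pow, cube_rpow_third (-x) (by linarith)]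
    ring

lemma phi_eq_sum_sq_of_row_single {d : ℕ} (W : Fin d → Fin d → ℝ)
    (hW : ∀ i, ∃ p, ∀ k ≠ p, W i k = 0) :
    phi d W = ∑ k, (∑ i, W i k ^ 3 - 1) ^ 2 := by
  have inner_cube : ∀ i j, (∑ k, W i k * W j k) ^ 3 = ∑ k, W i k ^ 3 * W j k ^ 3 := by
    intro i j
    obtain ⟨p, hp⟩ := hW i
    rw [Fintype.sum_eq_single p fun k hk => by simp [hp k hk],
      Fintype.sum_eq_single p fun k hk => by simp [hp k hk]]
    ring
  have gram : ∑ i, ∑ j, (∑ k, W i k * W j k) ^ 3 = ∑ k, (∑ i, W i k ^ 3) ^ 2 := by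
    simp_rw [inner_cube, sq, Finset.sum_mul_sum]
    exact Finset.sum_comm_cycle
  unfold phi
  rw [gram, Finset.sum_comm (f := fun i j => W i j ^ 3)]
  simp only [sub_sq, one_pow, mul_one, Finset.sum_add_distrib, Finset.sum_sub_distrib,
    ← Finset.mul_sum, Finset.sum_const, Finset.card_univ, Fintype.card_fin, nsmul_eq_mul]

lemma C5_row_single (d : ℕ) (t : ℝ) (i : Fin d) : ∃ p, ∀ k ≠ p, C5 d t i k = 0 := by
  by_cases hi : (i : ℕ) < d - 2
  · exact ⟨i, fun k hk => by simp [C5, hi, Ne.symm hk]⟩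
  · refine ⟨⟨d - 2, by omega⟩, fun k hk => ?_⟩
    have hk' : (k : ℕ) ≠ d - 2 := fun h => hk (Fin.ext h)
    simp [C5, hi, hk']

lemma C5_column_cube_sum {d : ℕ} (hd : 2 ≤ d) (t : ℝ) (k : Fin d) :
    ∑ i, C5 d t i k ^ 3 = if (k : ℕ) = d - 1 then 0 else 1 := by
  rcases lt_trichotomy (k : ℕ) (d - 2) with hk | hk | hk
  · rw [Fintype.sum_eq_single k fun i hi => ?_]
    · simp [C5, hk, show (k : ℕ) ≠ d - 1 by omega]
    · by_cases h : (i : ℕ) < d - 2 <;> simp [C5, h, hi, show (k : ℕ) ≠ d - 2 by omega]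
  · rw [Fintype.sum_eq_add ⟨d - 2, by omega⟩ ⟨d - 1, by omega⟩ (by simp [Fin.ext_iff]; omega)
      fun i hi => ?_]
    · simp [C5, hk, show d - 2 ≠ d - 1 by omega, show d - 1 ≠ d - 2 by omega,
        show ¬ d - 1 < d - 2 by omega, cbrt_pow_three]
    · simp only [ne_eq, Fin.ext_iff] at hi
      have hik : i ≠ k := fun e => by rw [Fin.ext_iff] at e; omega
      simp [C5, show (i : ℕ) < d - 2 by omega, hik]
  · have hk' : (k : ℕ) = d - 1 := by omega
    refine (Finset.sum_eq_zero fun i _ => ?_).trans (by simp [hk'])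
    by_cases h : (i : ℕ) < d - 2
    · simp [C5, h, show i ≠ k from fun e => by omega]
    · simp [C5, h, show (k : ℕ) ≠ d - 2 by omega]

lemma phi_C5 {d : ℕ} (hd : 2 ≤ d) (t : ℝ) : phi d (C5 d t) = 1 := by
  rw [phi_eq_sum_sq_of_row_single _ (C5_row_single d t)]
  have defect : ∀ k : Fin d,
      (∑ i, C5 d t i k ^ 3 - 1) ^ 2 = if k = ⟨d - 1, by omega⟩ then 1 else 0 := by
    intro k
    simp only [C5_column_cube_sum hd, Fin.ext_iff]
    split_ifs <;> norm_num
  simp_rw [defect, Finset.sum_ite_eq', Finset.mem_univ, if_true]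

lemma abs_le_norm_C5 {d : ℕ} (hd : 2 ≤ d) (t : ℝ) : |t| ≤ ‖C5 d t‖ := by
  have hentry : C5 d t ⟨d - 1, by omega⟩ ⟨d - 2, by omega⟩ = t := by
    simp [C5, show ¬ d - 1 < d - 2 by omega, show d - 1 ≠ d - 2 by omega]
  calc |t| = ‖C5 d t ⟨d - 1, by omega⟩ ⟨d - 2, by omega⟩‖ := by rw [hentry, Real.norm_eq_abs]
    _ ≤ ‖C5 d t ⟨d - 1, by omega⟩‖ := norm_le_pi_norm _ _
    _ ≤ ‖C5 d t‖ := norm_le_pi_norm _ _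

theorem stmt2 (d : ℕ) (hd : 2 ≤ d) :
    ¬ Bornology.IsBounded {W : Fin d → Fin d → ℝ | phi d W = 1} := by
  intro hbdd
  obtain ⟨C, hC⟩ := isBounded_iff_forall_norm_le.1 hbdd
  have hle : ‖C5 d (C + 1)‖ ≤ C := hC _ (phi_C5 hd (C + 1))
  linarith [le_abs_self (C + 1), abs_le_norm_C5 hd (C + 1)]
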